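/- Let d ≥ 1, n = (n₁,…,n_d) with each n_j ≥ 1, and let A ∈ ℂ^{n×n} be a density tensor. Then ‖A‖_{1,ℂ} ≤ α(n,ℂ)². Moreover, equality holds whenever A = T ⊗ conj(T) for a state T ∈ ℂ^{n₁×⋯×n_d} (‖T‖ = 1) with ‖T‖_{1,ℂ} = α(n,ℂ). -/

import Mathlib

open scoped ComplexOrder

noncomputable section


/-- The Euclidean norm of a vector in `𝕜^k`. -/
def vnorm {𝕜 : Type*} [RCLike 𝕜] {k : ℕ} (x : Fin k → 𝕜) : ℝ :=
  Real.sqrt (∑ i, ‖x i‖ ^ 2)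

/-- The rank-one tensor `x₁ ⊗ ⋯ ⊗ x_d`. -/
def rankOne {𝕜 : Type*} [RCLike 𝕜] {d : ℕ} {n : Fin d → ℕ}
    (x : ∀ j, Fin (n j) → 𝕜) : (∀ j, Fin (n j)) → 𝕜 :=
  fun i => ∏ j, x j (i j)

/-- The standard inner product `⟨T, Y⟩ = ∑ tᵢ · conj yᵢ` of tensors. -/
def tinner {𝕜 : Type*} [RCLike 𝕜] {d : ℕ} {n : Fin d → ℕ}
    (T Y : (∀ j, Fin (n j)) → 𝕜) : 𝕜 :=
  ∑ i, T i * (starRingEnd 𝕜) (Y i)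

/-- The Hilbert–Schmidt norm of a tensor. -/
def hsNorm {𝕜 : Type*} [RCLike 𝕜] {d : ℕ} {n : Fin d → ℕ}
    (T : (∀ j, Fin (n j)) → 𝕜) : ℝ :=
  Real.sqrt (∑ i, ‖T i‖ ^ 2)

/-- The spectral norm of a tensor:
`max {|⟨T, x₁⊗⋯⊗x_d⟩| : ‖x_j‖ = 1 for all j}`. -/
def specNorm {𝕜 : Type*} [RCLike 𝕜] {d : ℕ} {n : Fin d → ℕ}
    (T : (∀ j, Fin (n j)) → 𝕜) : ℝ :=
  sSup {r : ℝ | ∃ x : ∀ j, Fin (n j) → 𝕜, (∀ j, vnorm (x j) = 1) ∧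
    r = ‖tinner T (rankOne x)‖}

/-- The nuclear norm of a tensor:
`min {∑ᵢ ∏ⱼ ‖x_{i,j}‖ : T = ∑ᵢ x_{i,1}⊗⋯⊗x_{i,d}}`. -/
def nucNorm {𝕜 : Type*} [RCLike 𝕜] {d : ℕ} {n : Fin d → ℕ}
    (T : (∀ j, Fin (n j)) → 𝕜) : ℝ :=
  sInf {r : ℝ | ∃ (m : ℕ) (x : Fin m → ∀ j, Fin (n j) → 𝕜),
    T = (∑ i, rankOne (x i)) ∧ r = ∑ i, ∏ j, vnorm (x i j)}

/-- `α(n, 𝕜)`: the maximal nuclear norm of a tensor of Hilbert–Schmidt norm one. -/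
def alphaN (𝕜 : Type*) [RCLike 𝕜] (d : ℕ) (n : Fin d → ℕ) : ℝ :=
  sSup {r : ℝ | ∃ T : (∀ j, Fin (n j)) → 𝕜, hsNorm T = 1 ∧ r = nucNorm T}

/-- `β(n, 𝕜)`: the minimal spectral norm of a tensor of Hilbert–Schmidt norm one. -/
def betaN (𝕜 : Type*) [RCLike 𝕜] (d : ℕ) (n : Fin d → ℕ) : ℝ :=
  sInf {r : ℝ | ∃ T : (∀ j, Fin (n j)) → 𝕜, hsNorm T = 1 ∧ r = specNorm T}

/-- Multi-indices for `ℂ^{n₁ × ⋯ × n_d}`. -/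
abbrev MIdx (d : ℕ) (n : Fin d → ℕ) := ∀ j, Fin (n j)

/-- The trace of a `2d`-mode tensor `A ∈ ℂ^{n×n}`, viewed as a matrix. -/
def traceT {d : ℕ} {n : Fin d → ℕ} (A : MIdx d n → MIdx d n → ℂ) : ℂ :=
  ∑ p, A p p

/-- The nuclear norm of a `2d`-mode tensor `A ∈ ℂ^{n×n}`. -/
def nucNorm2 {d : ℕ} {n : Fin d → ℕ} (A : MIdx d n → MIdx d n → ℂ) : ℝ :=
  sInf {r : ℝ | ∃ (m : ℕ) (x y : Fin m → ∀ j, Fin (n j) → ℂ),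
    A = (fun p q => ∑ i, (∏ j, x i j (p j)) * (∏ j, y i j (q j))) ∧
    r = ∑ i, (∏ j, vnorm (x i j)) * (∏ j, vnorm (y i j))}

/-- A density tensor: hermitian positive semidefinite with trace one. -/
def IsDensity {d : ℕ} {n : Fin d → ℕ} (A : MIdx d n → MIdx d n → ℂ) : Prop :=
  (Matrix.of A).PosSemidef ∧ traceT A = 1

/-!
A density tensor factors as `B* B`, i.e. `A = ∑ₖ wₖ ⊗ conj wₖ` with `∑ₖ ‖wₖ‖² = tr A = 1`.
Multiplying out rank-one decompositions of the `wₖ` gives `‖A‖₁ ≤ ∑ₖ ‖wₖ‖₁² ≤ α² ∑ₖ ‖wₖ‖² = α²`.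
For a pure tensor the same construction gives `‖T ⊗ conj T‖₁ ≤ ‖T‖₁²`, and equality comes from
a Hahn–Banach functional `g` with `g T = ‖T‖₁` and `|g| ≤ ‖·‖₁`: the bilinear form `g ⊗ conj g`
takes the value `‖T‖₁²` on `T ⊗ conj T` and at most `∏ ‖xⱼ‖ ∏ ‖yⱼ‖` on each rank-one term
`x ⊗ y` of any decomposition.
-/

open ComplexConjugate

section NuclearNorm

variable {𝕜 : Type*} [RCLike 𝕜] {d : ℕ} {n : Fin d → ℕ}

lemma vnorm_eq_norm {k : ℕ} (x : Fin k → 𝕜) : vnorm x = ‖WithLp.toLp 2 x‖ := by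
  rw [EuclideanSpace.norm_eq]; rfl

lemma vnorm_nonneg {k : ℕ} (x : Fin k → 𝕜) : 0 ≤ vnorm x := Real.sqrt_nonneg _

lemma vnorm_smul {k : ℕ} (c : 𝕜) (x : Fin k → 𝕜) : vnorm (c • x) = ‖c‖ * vnorm x := by
  simp only [vnorm_eq_norm, WithLp.toLp_smul, norm_smul]

lemma vnorm_conj {k : ℕ} (x : Fin k → 𝕜) : vnorm (fun a => conj (x a)) = vnorm x := by
  simp [vnorm]

lemma vnorm_single {k : ℕ} (a : Fin k) (c : 𝕜) : vnorm (Pi.single a c) = ‖c‖ := by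
  simp only [vnorm_eq_norm, PiLp.toLp_single, PiLp.norm_single]

lemma hsNorm_eq_norm (T : MIdx d n → 𝕜) : hsNorm T = ‖WithLp.toLp 2 T‖ := by
  rw [EuclideanSpace.norm_eq]; rfl

lemma hsNorm_nonneg (T : MIdx d n → 𝕜) : 0 ≤ hsNorm T := Real.sqrt_nonneg _

lemma norm_le_hsNorm (T : MIdx d n → 𝕜) (p : MIdx d n) : ‖T p‖ ≤ hsNorm T := by
  rw [hsNorm_eq_norm]
  exact PiLp.norm_apply_le (WithLp.toLp 2 T) p

lemma conj_rankOne (x : ∀ j, Fin (n j) → 𝕜) (p : MIdx d n) :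
    conj (rankOne x p) = rankOne (fun j a => conj (x j a)) p :=
  map_prod _ _ _

lemma rankOne_update_smul (x : ∀ j, Fin (n j) → 𝕜) (j₀ : Fin d) (c : 𝕜) :
    rankOne (Function.update x j₀ (c • x j₀)) = c • rankOne x := by
  funext p
  simp only [rankOne, Pi.smul_apply, smul_eq_mul]
  rw [← Finset.mul_prod_erase _ _ (Finset.mem_univ j₀),
    ← Finset.mul_prod_erase _ _ (Finset.mem_univ j₀)]
  simp only [Function.update_self, Pi.smul_apply, smul_eq_mul, mul_assoc]
  congr 2
  exact Finset.prod_congr rfl fun j hj => by rw [Function.update_of_ne (Finset.ne_of_mem_erase hj)]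

lemma prod_vnorm_update_smul (x : ∀ j, Fin (n j) → 𝕜) (j₀ : Fin d) (c : 𝕜) :
    ∏ j, vnorm (Function.update x j₀ (c • x j₀) j) = ‖c‖ * ∏ j, vnorm (x j) := by
  rw [← Finset.mul_prod_erase _ _ (Finset.mem_univ j₀),
    ← Finset.mul_prod_erase _ _ (Finset.mem_univ j₀)]
  simp only [Function.update_self, vnorm_smul, mul_assoc]
  congr 2
  exact Finset.prod_congr rfl fun j hj => by rw [Function.update_of_ne (Finset.ne_of_mem_erase hj)]

def nucCosts (T : MIdx d n → 𝕜) : Set ℝ :=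
  {r : ℝ | ∃ (m : ℕ) (x : Fin m → ∀ j, Fin (n j) → 𝕜),
    T = (∑ i, rankOne (x i)) ∧ r = ∑ i, ∏ j, vnorm (x i j)}

lemma nucNorm_eq_sInf (T : MIdx d n → 𝕜) : nucNorm T = sInf (nucCosts T) := rfl

lemma nonneg_of_mem_nucCosts {T : MIdx d n → 𝕜} {r : ℝ} (hr : r ∈ nucCosts T) : 0 ≤ r := by
  obtain ⟨m, x, -, rfl⟩ := hr
  exact Finset.sum_nonneg fun i _ => Finset.prod_nonneg fun j _ => vnorm_nonneg _

lemma bddBelow_nucCosts (T : MIdx d n → 𝕜) : BddBelow (nucCosts T) :=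
  ⟨0, fun _ => nonneg_of_mem_nucCosts⟩

lemma zero_mem_nucCosts : (0 : ℝ) ∈ nucCosts (0 : MIdx d n → 𝕜) :=
  ⟨0, Fin.elim0, by simp, by simp⟩

lemma prod_vnorm_mem_nucCosts (x : ∀ j, Fin (n j) → 𝕜) :
    ∏ j, vnorm (x j) ∈ nucCosts (rankOne x) :=
  ⟨1, fun _ => x, by simp, by simp⟩

lemma add_mem_nucCosts {S T : MIdx d n → 𝕜} {a b : ℝ} (ha : a ∈ nucCosts S)
    (hb : b ∈ nucCosts T) : a + b ∈ nucCosts (S + T) := by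
  obtain ⟨m₁, x₁, rfl, rfl⟩ := ha
  obtain ⟨m₂, x₂, rfl, rfl⟩ := hb
  exact ⟨m₁ + m₂, Fin.append x₁ x₂, by simp [Fin.sum_univ_add], by simp [Fin.sum_univ_add]⟩

lemma sum_mem_nucCosts {ι : Type*} (s : Finset ι) {T : ι → MIdx d n → 𝕜} {c : ι → ℝ}
    (h : ∀ k ∈ s, c k ∈ nucCosts (T k)) : ∑ k ∈ s, c k ∈ nucCosts (∑ k ∈ s, T k) := by
  classical
  induction s using Finset.induction_on with
  | empty => simpa using zero_mem_nucCosts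
  | insert k s hk ih =>
    rw [Finset.sum_insert hk, Finset.sum_insert hk]
    exact add_mem_nucCosts (h k (by simp)) (ih fun k' hk' => h k' (by simp [hk']))

lemma smul_mem_nucCosts [NeZero d] {T : MIdx d n → 𝕜} {r : ℝ} (c : 𝕜) (hr : r ∈ nucCosts T) :
    ‖c‖ * r ∈ nucCosts (c • T) := by
  obtain ⟨m, x, rfl, rfl⟩ := hr
  refine ⟨m, fun i => Function.update (x i) 0 (c • x i 0), ?_, ?_⟩
  · simp [rankOne_update_smul, Finset.smul_sum]
  · simp only [prod_vnorm_update_smul, Finset.mul_sum]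

lemma exists_rankOne_eq_single [NeZero d] (p : MIdx d n) (c : 𝕜) :
    ∃ x : ∀ j, Fin (n j) → 𝕜, rankOne x = Pi.single p c ∧ ∏ j, vnorm (x j) = ‖c‖ := by
  let e : ∀ j, Fin (n j) → 𝕜 := fun j => Pi.single (p j) 1
  have he : rankOne e = Pi.single p 1 := by
    funext q
    by_cases hq : q = p
    · subst hq; simp [rankOne, e]
    · obtain ⟨j, hj⟩ := Function.ne_iff.mp hq
      rw [Pi.single_eq_of_ne hq]
      exact Finset.prod_eq_zero (Finset.mem_univ j) (Pi.single_eq_of_ne hj _)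
  refine ⟨Function.update e 0 (c • e 0), ?_, ?_⟩
  · rw [rankOne_update_smul, he, ← Pi.single_smul, smul_eq_mul, mul_one]
  · simp [prod_vnorm_update_smul, e, vnorm_single]

lemma sum_norm_mem_nucCosts [NeZero d] (T : MIdx d n → 𝕜) : ∑ p, ‖T p‖ ∈ nucCosts T := by
  choose x hx hcost using fun p => exists_rankOne_eq_single p (T p)
  have := sum_mem_nucCosts Finset.univ fun p _ => prod_vnorm_mem_nucCosts (x p)
  simpa only [hx, hcost, Finset.univ_sum_single] using this

lemma nucCosts_nonempty [NeZero d] (T : MIdx d n → 𝕜) : (nucCosts T).Nonempty :=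
  ⟨_, sum_norm_mem_nucCosts T⟩

lemma nucNorm_le_of_mem {T : MIdx d n → 𝕜} {r : ℝ} (hr : r ∈ nucCosts T) : nucNorm T ≤ r :=
  csInf_le (bddBelow_nucCosts T) hr

lemma nucNorm_nonneg [NeZero d] (T : MIdx d n → 𝕜) : 0 ≤ nucNorm T :=
  le_csInf (nucCosts_nonempty T) fun _ => nonneg_of_mem_nucCosts

lemma nucNorm_zero : nucNorm (0 : MIdx d n → 𝕜) = 0 :=
  (nucNorm_le_of_mem zero_mem_nucCosts).antisymm
    (le_csInf ⟨0, zero_mem_nucCosts⟩ fun _ => nonneg_of_mem_nucCosts)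

lemma nucNorm_rankOne_le (x : ∀ j, Fin (n j) → 𝕜) : nucNorm (rankOne x) ≤ ∏ j, vnorm (x j) :=
  nucNorm_le_of_mem (prod_vnorm_mem_nucCosts x)

lemma nucNorm_add_le [NeZero d] (S T : MIdx d n → 𝕜) :
    nucNorm (S + T) ≤ nucNorm S + nucNorm T := by
  rw [nucNorm_eq_sInf, nucNorm_eq_sInf, nucNorm_eq_sInf, ← csInf_add (nucCosts_nonempty S)
    (bddBelow_nucCosts S) (nucCosts_nonempty T) (bddBelow_nucCosts T)]
  exact csInf_le_csInf (bddBelow_nucCosts _)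
    ((nucCosts_nonempty S).add (nucCosts_nonempty T))
    (Set.add_subset_iff.mpr fun _ ha _ hb => add_mem_nucCosts ha hb)

lemma nucNorm_smul_le [NeZero d] (c : 𝕜) (T : MIdx d n → 𝕜) :
    nucNorm (c • T) ≤ ‖c‖ * nucNorm T := by
  rw [nucNorm_eq_sInf, nucNorm_eq_sInf, ← smul_eq_mul, ← Real.sInf_smul_of_nonneg (norm_nonneg c)]
  refine csInf_le_csInf (bddBelow_nucCosts _) ((nucCosts_nonempty T).smul_set) ?_
  rintro _ ⟨r, hr, rfl⟩
  exact smul_mem_nucCosts c hr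

lemma nucNorm_smul [NeZero d] (c : 𝕜) (T : MIdx d n → 𝕜) :
    nucNorm (c • T) = ‖c‖ * nucNorm T := by
  rcases eq_or_ne c 0 with rfl | hc
  · simp [nucNorm_zero]
  refine (nucNorm_smul_le c T).antisymm ?_
  calc ‖c‖ * nucNorm T = ‖c‖ * nucNorm (c⁻¹ • c • T) := by rw [inv_smul_smul₀ hc]
    _ ≤ ‖c‖ * (‖c⁻¹‖ * nucNorm (c • T)) := by gcongr; exact nucNorm_smul_le _ _
    _ = nucNorm (c • T) := by rw [norm_inv, ← mul_assoc, mul_inv_cancel₀ (norm_ne_zero_iff.mpr hc),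
        one_mul]

lemma exists_dual_nucNorm [NeZero d] (T : MIdx d n → 𝕜) :
    ∃ g : Module.Dual 𝕜 (MIdx d n → 𝕜), (∀ S, ‖g S‖ ≤ nucNorm S) ∧ g T = nucNorm T := by
  have hker : ∀ c : 𝕜, c • T = 0 → c • (nucNorm T : 𝕜) = 0 := fun c hc => by
    have h := nucNorm_smul c T
    rw [hc, nucNorm_zero] at h
    rw [← norm_eq_zero, norm_smul, RCLike.norm_ofReal, abs_of_nonneg (nucNorm_nonneg T), ← h]
  let f := LinearPMap.mkSpanSingleton' (σ := RingHom.id 𝕜) T (nucNorm T : 𝕜) hker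
  obtain ⟨g, hgf, hg⟩ := Module.Dual.exists_extension_of_le_seminorm f.domain f.toFun
    (p := Seminorm.of nucNorm nucNorm_add_le nucNorm_smul) (by
      rintro ⟨_, hS⟩
      obtain ⟨c, rfl⟩ := Submodule.mem_span_singleton.mp hS
      rw [LinearPMap.toFun_eq_coe, LinearPMap.mkSpanSingleton'_apply, norm_smul,
        RCLike.norm_ofReal, abs_of_nonneg (nucNorm_nonneg T)]
      exact (nucNorm_smul c T).ge)
  refine ⟨g, hg, ?_⟩
  have hT : T ∈ f.domain := Submodule.mem_span_singleton_self T
  exact (hgf ⟨T, hT⟩).trans (LinearPMap.mkSpanSingleton'_apply_self T _ hker hT)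

lemma nucNorm_le_sum_norm [NeZero d] (T : MIdx d n → 𝕜) : nucNorm T ≤ ∑ p, ‖T p‖ :=
  nucNorm_le_of_mem (sum_norm_mem_nucCosts T)

lemma nucNorm_le_alphaN [NeZero d] {T : MIdx d n → 𝕜} (hT : hsNorm T = 1) :
    nucNorm T ≤ alphaN 𝕜 d n := by
  refine le_csSup ⟨Fintype.card (MIdx d n), ?_⟩ ⟨T, hT, rfl⟩
  rintro _ ⟨S, hS, rfl⟩
  calc nucNorm S ≤ ∑ p, ‖S p‖ := nucNorm_le_sum_norm S
    _ ≤ ∑ _p : MIdx d n, hsNorm S := Finset.sum_le_sum fun p _ => norm_le_hsNorm S p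
    _ = Fintype.card (MIdx d n) := by simp [hS]

lemma nucNorm_le_alphaN_mul_hsNorm [NeZero d] (T : MIdx d n → 𝕜) :
    nucNorm T ≤ alphaN 𝕜 d n * hsNorm T := by
  rcases eq_or_ne (hsNorm T) 0 with h | h
  · rw [hsNorm_eq_norm, norm_eq_zero, WithLp.toLp_eq_zero] at h
    simp [h, nucNorm_zero, hsNorm_eq_norm]
  have hunit : hsNorm ((hsNorm T : 𝕜)⁻¹ • T) = 1 := by
    rw [hsNorm_eq_norm, WithLp.toLp_smul, norm_smul, ← hsNorm_eq_norm, norm_inv,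
      RCLike.norm_ofReal, abs_of_nonneg (hsNorm_nonneg T), inv_mul_cancel₀ h]
  calc nucNorm T = nucNorm ((hsNorm T : 𝕜) • (hsNorm T : 𝕜)⁻¹ • T) := by
        rw [smul_inv_smul₀ (by exact_mod_cast h)]
    _ = hsNorm T * nucNorm ((hsNorm T : 𝕜)⁻¹ • T) := by
        rw [nucNorm_smul, RCLike.norm_ofReal, abs_of_nonneg (hsNorm_nonneg T)]
    _ ≤ hsNorm T * alphaN 𝕜 d n :=
        mul_le_mul_of_nonneg_left (nucNorm_le_alphaN hunit) (hsNorm_nonneg T)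
    _ = alphaN 𝕜 d n * hsNorm T := mul_comm _ _

end NuclearNorm

section BipartiteNuclearNorm

variable {d : ℕ} {n : Fin d → ℕ}

def pureDensity (T : MIdx d n → ℂ) : MIdx d n → MIdx d n → ℂ :=
  fun p q => T p * conj (T q)

def nuc2Costs (A : MIdx d n → MIdx d n → ℂ) : Set ℝ :=
  {r : ℝ | ∃ (m : ℕ) (x y : Fin m → ∀ j, Fin (n j) → ℂ),
    A = (fun p q => ∑ i, (∏ j, x i j (p j)) * (∏ j, y i j (q j))) ∧
    r = ∑ i, (∏ j, vnorm (x i j)) * (∏ j, vnorm (y i j))}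

lemma nucNorm2_eq_sInf (A : MIdx d n → MIdx d n → ℂ) : nucNorm2 A = sInf (nuc2Costs A) := rfl

lemma nonneg_of_mem_nuc2Costs {A : MIdx d n → MIdx d n → ℂ} {r : ℝ} (hr : r ∈ nuc2Costs A) :
    0 ≤ r := by
  obtain ⟨m, x, y, -, rfl⟩ := hr
  exact Finset.sum_nonneg fun i _ => mul_nonneg
    (Finset.prod_nonneg fun j _ => vnorm_nonneg _) (Finset.prod_nonneg fun j _ => vnorm_nonneg _)

lemma bddBelow_nuc2Costs (A : MIdx d n → MIdx d n → ℂ) : BddBelow (nuc2Costs A) :=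
  ⟨0, fun _ => nonneg_of_mem_nuc2Costs⟩

lemma zero_mem_nuc2Costs : (0 : ℝ) ∈ nuc2Costs (0 : MIdx d n → MIdx d n → ℂ) :=
  ⟨0, Fin.elim0, Fin.elim0, by funext p q; simp, by simp⟩

lemma mul_mem_nuc2Costs (x y : ∀ j, Fin (n j) → ℂ) :
    (∏ j, vnorm (x j)) * (∏ j, vnorm (y j)) ∈ nuc2Costs (fun p q => rankOne x p * rankOne y q) :=
  ⟨1, fun _ => x, fun _ => y, by simp [rankOne], by simp⟩

lemma add_mem_nuc2Costs {A B : MIdx d n → MIdx d n → ℂ} {a b : ℝ} (ha : a ∈ nuc2Costs A)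
    (hb : b ∈ nuc2Costs B) : a + b ∈ nuc2Costs (A + B) := by
  obtain ⟨m₁, x₁, y₁, rfl, rfl⟩ := ha
  obtain ⟨m₂, x₂, y₂, rfl, rfl⟩ := hb
  exact ⟨m₁ + m₂, Fin.append x₁ x₂, Fin.append y₁ y₂, by funext p q; simp [Fin.sum_univ_add],
    by simp [Fin.sum_univ_add]⟩

lemma sum_mem_nuc2Costs {ι : Type*} (s : Finset ι) {A : ι → MIdx d n → MIdx d n → ℂ}
    {c : ι → ℝ} (h : ∀ k ∈ s, c k ∈ nuc2Costs (A k)) :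
    ∑ k ∈ s, c k ∈ nuc2Costs (∑ k ∈ s, A k) := by
  classical
  induction s using Finset.induction_on with
  | empty => simpa using zero_mem_nuc2Costs
  | insert k s hk ih =>
    rw [Finset.sum_insert hk, Finset.sum_insert hk]
    exact add_mem_nuc2Costs (h k (by simp)) (ih fun k' hk' => h k' (by simp [hk']))

lemma sq_mem_nuc2Costs_pureDensity {T : MIdx d n → ℂ} {r : ℝ} (hr : r ∈ nucCosts T) :
    r ^ 2 ∈ nuc2Costs (pureDensity T) := by
  obtain ⟨m, x, rfl, rfl⟩ := hr
  have hdecomp : pureDensity (∑ i, rankOne (x i)) = ∑ i, ∑ i',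
      fun p q => rankOne (x i) p * rankOne (fun j a => conj (x i' j a)) q := by
    funext p q
    simp [pureDensity, Finset.sum_apply, Finset.sum_mul_sum, conj_rankOne]
  rw [hdecomp, sq, Finset.sum_mul_sum]
  refine sum_mem_nuc2Costs _ fun i _ => sum_mem_nuc2Costs _ fun i' _ => ?_
  simpa only [vnorm_conj] using mul_mem_nuc2Costs (x i) (fun j a => conj (x i' j a))

lemma nuc2Costs_pureDensity_nonempty [NeZero d] (T : MIdx d n → ℂ) :
    (nuc2Costs (pureDensity T)).Nonempty :=
  ⟨_, sq_mem_nuc2Costs_pureDensity (sum_norm_mem_nucCosts T)⟩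

lemma nucNorm2_le_of_mem {A : MIdx d n → MIdx d n → ℂ} {r : ℝ} (hr : r ∈ nuc2Costs A) :
    nucNorm2 A ≤ r :=
  csInf_le (bddBelow_nuc2Costs A) hr

lemma nucNorm2_add_le {A B : MIdx d n → MIdx d n → ℂ} (hA : (nuc2Costs A).Nonempty)
    (hB : (nuc2Costs B).Nonempty) : nucNorm2 (A + B) ≤ nucNorm2 A + nucNorm2 B := by
  rw [nucNorm2_eq_sInf, nucNorm2_eq_sInf, nucNorm2_eq_sInf,
    ← csInf_add hA (bddBelow_nuc2Costs A) hB (bddBelow_nuc2Costs B)]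
  exact csInf_le_csInf (bddBelow_nuc2Costs _) (hA.add hB)
    (Set.add_subset_iff.mpr fun _ ha _ hb => add_mem_nuc2Costs ha hb)

lemma nucNorm2_sum_pureDensity_le [NeZero d] {ι : Type*} (s : Finset ι) (w : ι → MIdx d n → ℂ) :
    nucNorm2 (∑ k ∈ s, pureDensity (w k)) ≤ ∑ k ∈ s, nucNorm2 (pureDensity (w k)) :=
  Finset.le_sum_of_subadditive_on_pred nucNorm2 (fun A => (nuc2Costs A).Nonempty)
    (nucNorm2_le_of_mem zero_mem_nuc2Costs) (fun _ _ => nucNorm2_add_le)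
    (fun _ _ ⟨a, ha⟩ ⟨b, hb⟩ => ⟨a + b, add_mem_nuc2Costs ha hb⟩) _
    fun k _ => nuc2Costs_pureDensity_nonempty (w k)

lemma nucNorm2_pureDensity_le [NeZero d] (T : MIdx d n → ℂ) :
    nucNorm2 (pureDensity T) ≤ nucNorm T ^ 2 := by
  have h : √(nucNorm2 (pureDensity T)) ≤ nucNorm T :=
    le_csInf (nucCosts_nonempty T) fun r hr => Real.sqrt_le_iff.mpr
      ⟨nonneg_of_mem_nucCosts hr, nucNorm2_le_of_mem (sq_mem_nuc2Costs_pureDensity hr)⟩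
  exact (Real.sqrt_le_iff.mp h).2

lemma sq_norm_le_nucNorm2_pureDensity [NeZero d] (u : MIdx d n → ℂ)
    (hu : ∀ x : ∀ j, Fin (n j) → ℂ, ‖∑ p, rankOne x p * u p‖ ≤ ∏ j, vnorm (x j))
    (T : MIdx d n → ℂ) : ‖∑ p, T p * u p‖ ^ 2 ≤ nucNorm2 (pureDensity T) := by
  refine le_csInf (nuc2Costs_pureDensity_nonempty T) ?_
  rintro _ ⟨m, x, y, hxy, rfl⟩
  let φ : (MIdx d n → ℂ) → ℂ := fun S => ∑ p, S p * u p
  have hexpand : φ T * conj (φ T) =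
      ∑ i, φ (rankOne (x i)) * conj (φ (rankOne fun j a => conj (y i j a))) := by
    have h : ∀ p q, T p * conj (T q) = ∑ i, rankOne (x i) p * rankOne (y i) q :=
      fun p q => congrFun₂ hxy p q
    calc φ T * conj (φ T) = ∑ p, ∑ q, T p * conj (T q) * (u p * conj (u q)) := by
          simp only [φ, map_sum, map_mul, Finset.sum_mul_sum, mul_mul_mul_comm]
      _ = ∑ i, ∑ p, ∑ q, rankOne (x i) p * u p * (rankOne (y i) q * conj (u q)) := by
          simp only [h, Finset.sum_mul]
          refine (Finset.sum_congr rfl fun p _ => Finset.sum_comm).trans (Finset.sum_comm.trans ?_)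
          exact Finset.sum_congr rfl fun i _ => Finset.sum_congr rfl fun p _ =>
            Finset.sum_congr rfl fun q _ => by ring
      _ = _ := by
          simp only [φ, map_sum, map_mul, ← conj_rankOne, Complex.conj_conj, Finset.sum_mul_sum]
  calc ‖φ T‖ ^ 2 = ‖φ T * conj (φ T)‖ := by rw [norm_mul, RCLike.norm_conj, sq]
    _ ≤ ∑ i, ‖φ (rankOne (x i))‖ * ‖φ (rankOne fun j a => conj (y i j a))‖ := by
        rw [hexpand]
        exact (norm_sum_le _ _).trans_eq (by simp only [norm_mul, RCLike.norm_conj])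
    _ ≤ ∑ i, (∏ j, vnorm (x i j)) * ∏ j, vnorm (y i j) :=
        Finset.sum_le_sum fun i _ => mul_le_mul (hu _) ((hu _).trans_eq (by simp only [vnorm_conj]))
          (norm_nonneg _) (Finset.prod_nonneg fun j _ => vnorm_nonneg _)

lemma sq_nucNorm_le_nucNorm2_pureDensity [NeZero d] (T : MIdx d n → ℂ) :
    nucNorm T ^ 2 ≤ nucNorm2 (pureDensity T) := by
  obtain ⟨g, hg, hgT⟩ := exists_dual_nucNorm T
  have hcoord (S : MIdx d n → ℂ) : g S = ∑ p, S p * g fun q => if p = q then 1 else 0 := by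
    simpa only [smul_eq_mul] using g.pi_apply_eq_sum_univ S
  have h := sq_norm_le_nucNorm2_pureDensity (fun p => g fun q => if p = q then 1 else 0)
    (fun x => by rw [← hcoord]; exact (hg _).trans (nucNorm_rankOne_le x)) T
  rwa [← hcoord, hgT, RCLike.norm_ofReal, abs_of_nonneg (nucNorm_nonneg T)] at h

lemma nucNorm2_pureDensity [NeZero d] (T : MIdx d n → ℂ) :
    nucNorm2 (pureDensity T) = nucNorm T ^ 2 :=
  (nucNorm2_pureDensity_le T).antisymm (sq_nucNorm_le_nucNorm2_pureDensity T)

open scoped MatrixOrder in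
lemma IsDensity.exists_eq_sum_pureDensity {A : MIdx d n → MIdx d n → ℂ} (hA : IsDensity A) :
    ∃ w : MIdx d n → MIdx d n → ℂ, A = ∑ k, pureDensity (w k) ∧ ∑ k, hsNorm (w k) ^ 2 = 1 := by
  obtain ⟨B, hB⟩ := CStarAlgebra.nonneg_iff_eq_star_mul_self.mp hA.1.nonneg
  have hentry (p q : MIdx d n) : A p q = ∑ k, conj (B k p) * B k q := by
    simpa [Matrix.mul_apply] using congrFun₂ hB p q
  refine ⟨fun k p => conj (B k p), ?_, ?_⟩
  · funext p q
    simp [hentry, pureDensity, Finset.sum_apply]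
  · have htrace := hA.2
    simp only [traceT, hentry] at htrace
    rw [Finset.sum_comm] at htrace
    have hnorm (k : MIdx d n) : ((hsNorm (fun p => conj (B k p)) ^ 2 : ℝ) : ℂ) =
        ∑ p, conj (B k p) * B k p := by
      rw [hsNorm, Real.sq_sqrt (Finset.sum_nonneg fun p _ => by positivity)]
      push_cast
      exact Finset.sum_congr rfl fun p _ => by rw [RCLike.norm_conj, Complex.conj_mul']
    exact_mod_cast (Finset.sum_congr rfl fun k _ => hnorm k).trans htrace

end BipartiteNuclearNorm

theorem stmt13_general (d : ℕ) (hd : 1 ≤ d) (n : Fin d → ℕ)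
    (A : MIdx d n → MIdx d n → ℂ) (hA : IsDensity A) :
    nucNorm2 A ≤ (alphaN ℂ d n) ^ 2 ∧
    ∀ T : MIdx d n → ℂ, hsNorm T = 1 → nucNorm T = alphaN ℂ d n →
      A = (fun p q => T p * (starRingEnd ℂ) (T q)) →
      nucNorm2 A = (alphaN ℂ d n) ^ 2 := by
  have : NeZero d := ⟨by omega⟩
  refine ⟨?_, fun T _ hT hAT => hAT ▸ (nucNorm2_pureDensity T).trans (by rw [hT])⟩
  obtain ⟨w, rfl, hw⟩ := hA.exists_eq_sum_pureDensity
  calc nucNorm2 (∑ k, pureDensity (w k)) ≤ ∑ k, nucNorm2 (pureDensity (w k)) :=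
        nucNorm2_sum_pureDensity_le _ w
    _ = ∑ k, nucNorm (w k) ^ 2 := by simp only [nucNorm2_pureDensity]
    _ ≤ ∑ k, (alphaN ℂ d n * hsNorm (w k)) ^ 2 := Finset.sum_le_sum fun k _ =>
        pow_le_pow_left₀ (nucNorm_nonneg _) (nucNorm_le_alphaN_mul_hsNorm _) 2
    _ = alphaN ℂ d n ^ 2 := by simp only [mul_pow, ← Finset.mul_sum, hw, mul_one]

/-- A density tensor `A` satisfies `‖A‖₁ ≤ α(n,ℂ)²`, with equality
whenever `A = T ⊗ conj T` for a state `T` of maximal nuclear norm `α(n,ℂ)`. -/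
theorem stmt13 (d : ℕ) (hd : 1 ≤ d) (n : Fin d → ℕ) (hn : ∀ j, 1 ≤ n j)
    (A : MIdx d n → MIdx d n → ℂ) (hA : IsDensity A) :
    nucNorm2 A ≤ (alphaN ℂ d n) ^ 2 ∧
    ∀ T : MIdx d n → ℂ, hsNorm T = 1 → nucNorm T = alphaN ℂ d n →
      A = (fun p q => T p * (starRingEnd ℂ) (T q)) →
      nucNorm2 A = (alphaN ℂ d n) ^ 2 :=
  stmt13_general d hd n A hA
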